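/- Let c be a growing letter belonging to a p-cycle (c₀,…,c_{p−1}) of the graph G_L (where a →ᴸ LC(σ(a))), say c = c₀. Then LB(σᵖ(c)) = L(c) where L(c₀) = ⊔_{j=0}^{p−1} σ^{p−1−j}(LB(σ(c_j))), and there exists v ∈ A* with σᵖ(c) = L(c)·c·v. -/

import Mathlib

open List
open scoped Classical

namespace SubstPaper

variable {A : Type*}

/-- Apply a substitution letterwise to a word. -/
def applyW (σ : A → List A) (u : List A) : List A := u.flatMap σ

/-- `n`-th iterate of a substitution on a word. -/
def iterW (σ : A → List A) (n : ℕ) (u : List A) : List A := (applyW σ)^[n] u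

/-- Non-erasing substitution. -/
def NonErasing (σ : A → List A) : Prop := ∀ a, σ a ≠ []

/-- A letter is bounded if the lengths of its iterated images stay bounded. -/
def IsBounded (σ : A → List A) (a : A) : Prop := ∃ K, ∀ n, (iterW σ n [a]).length ≤ K

/-- A letter is growing if it is not bounded. -/
def IsGrowing (σ : A → List A) (a : A) : Prop := ¬ IsBounded σ a

/-- The prefix of `u` consisting of bounded letters, before the first growing letter. -/
noncomputable def LBw (σ : A → List A) (u : List A) : List A :=
  u.takeWhile (fun a => decide (IsBounded σ a))

/-- The first growing letter of `u` (junk value if none). -/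
noncomputable def LCw [Inhabited A] (σ : A → List A) (u : List A) : A :=
  (u.dropWhile (fun a => decide (IsBounded σ a))).headI

/-- The bounded suffix of `u`, after the last growing letter. -/
noncomputable def RBw (σ : A → List A) (u : List A) : List A :=
  (LBw σ u.reverse).reverse

/-- The last growing letter of `u` (junk value if none). -/
noncomputable def RCw [Inhabited A] (σ : A → List A) (u : List A) : A :=
  LCw σ u.reverse

/-- Growing letters occurring in a word. -/
def alphC (σ : A → List A) (u : List A) : Set A := {c | IsGrowing σ c ∧ c ∈ u}

/-- The map on alphabets induced by the substitution: `D ↦ ⋃_{a ∈ D} alph_C(σ(a))`. -/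
def FAlph (σ : A → List A) (D : Set A) : Set A := ⋃ a ∈ D, alphC σ (σ a)

/-- `D` is a `k`-periodic alphabet: nonempty set of growing letters, `k` least positive
with `F^[k] D = D`. -/
def IsKPeriodicAlph (σ : A → List A) (D : Set A) (k : ℕ) : Prop :=
  D.Nonempty ∧ (∀ a ∈ D, IsGrowing σ a) ∧ 0 < k ∧ (FAlph σ)^[k] D = D ∧
    ∀ j, 0 < j → (FAlph σ)^[j] D = D → k ≤ j

/-- `D` is a minimal alphabet: periodic with no proper nonempty periodic subalphabet. -/
def IsMinimalAlph (σ : A → List A) (D : Set A) : Prop :=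
  (∃ k, IsKPeriodicAlph σ D k) ∧
    ∀ D' ⊆ D, D'.Nonempty → (∃ k', IsKPeriodicAlph σ D' k') → D' = D

/-- The finite word `u` occurs in the bi-infinite word `x`. -/
def OccursIn (x : ℤ → A) (u : List A) : Prop :=
  ∃ i : ℤ, ∀ j : Fin u.length, x (i + j.1) = u.get j

/-- The substitution subshift `X_σ`. -/
def Xsub (σ : A → List A) : Set (ℤ → A) :=
  {x | ∀ u, OccursIn x u → ∃ a n, u <:+: iterW σ n [a]}

/-- The left shift on bi-infinite words. -/
def shiftT (x : ℤ → A) : ℤ → A := fun i => x (i + 1)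

/-- A subshift: nonempty, closed, shift-invariant. -/
def IsSubshift [TopologicalSpace A] (X : Set (ℤ → A)) : Prop :=
  X.Nonempty ∧ IsClosed X ∧ shiftT '' X = X

/-- A minimal subshift: contains no proper subshift. -/
def IsMinimalSubshift [TopologicalSpace A] (X : Set (ℤ → A)) : Prop :=
  IsSubshift X ∧ ∀ Y ⊆ X, IsSubshift Y → Y = X

/-- The periodic bi-infinite word `ωuω`. -/
noncomputable def perWord [Inhabited A] (u : List A) : ℤ → A :=
  fun i => u.getD ((i % (u.length : ℤ)).toNat) default

/-- The shift-orbit closure `X(x)` of a bi-infinite word. -/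
def orbitClosure [TopologicalSpace A] (x : ℤ → A) : Set (ℤ → A) :=
  closure {y | ∃ k : ℤ, ∀ i, y i = x (i + k)}

/-- `x` is the letterwise image of `y` under `σ`, with the origin at the image of
position `0`. -/
def IsSubstImage (σ : A → List A) (y x : ℤ → A) : Prop :=
  ∃ c : ℤ → ℤ, c 0 = 0 ∧ (∀ i, c (i + 1) = c i + (σ (y i)).length) ∧
    ∀ i : ℤ, ∀ j : Fin (σ (y i)).length, x (c i + j.1) = (σ (y i)).get j

/-- The induced map `σ̃` on subshifts: all shifts of images of elements of `X`. -/
def tildeS (σ : A → List A) (X : Set (ℤ → A)) : Set (ℤ → A) :=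
  {z | ∃ x ∈ X, ∃ k : ℤ, IsSubstImage σ x (fun i => z (i + k))}

/-- Growing letters occurring in some element of `X`. -/
def alphCX (σ : A → List A) (X : Set (ℤ → A)) : Set A :=
  {c | IsGrowing σ c ∧ ∃ x ∈ X, ∃ i : ℤ, x i = c}

/-- The subshift of the restriction `σᵏ|_E` (words whose factors occur in some
`σ^{kn}(a)`, `a ∈ E`). -/
def Xrestr (σ : A → List A) (E : Set A) (k : ℕ) : Set (ℤ → A) :=
  {x | ∀ u, OccursIn x u → ∃ a ∈ E, ∃ n, u <:+: iterW σ (k * n) [a]}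

/-- A growing letter `c` is left-isolated: `σⁿ(c) = u c v` with `u` nonempty bounded. -/
def LeftIsolated (σ : A → List A) (c : A) : Prop :=
  IsGrowing σ c ∧ ∃ n, 1 ≤ n ∧ ∃ u v : List A, u ≠ [] ∧ (∀ b ∈ u, IsBounded σ b) ∧
    iterW σ n [c] = u ++ c :: v

/-- A growing letter `c` is right-isolated: `σⁿ(c) = v c u` with `u` nonempty bounded. -/
def RightIsolated (σ : A → List A) (c : A) : Prop :=
  IsGrowing σ c ∧ ∃ n, 1 ≤ n ∧ ∃ u v : List A, u ≠ [] ∧ (∀ b ∈ u, IsBounded σ b) ∧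
    iterW σ n [c] = v ++ c :: u

/-- Growing letter that is neither left- nor right-isolated (member of `C_niso`). -/
def NonIsolated (σ : A → List A) (c : A) : Prop :=
  IsGrowing σ c ∧ ¬ LeftIsolated σ c ∧ ¬ RightIsolated σ c

/-- A periodic letter: bounded, and occurring in some `σⁿ(a)`, `n ≥ 1`. -/
def IsPeriodicLetter (σ : A → List A) (a : A) : Prop :=
  IsBounded σ a ∧ ∃ n, 1 ≤ n ∧ [a] <:+: iterW σ n [a]

/-- `(a,u,b)` is a 1-block of the word `w`. -/
def Is1Block (σ : A → List A) (w : List A) (t : A × List A × A) : Prop :=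
  IsGrowing σ t.1 ∧ IsGrowing σ t.2.2 ∧ (∀ x ∈ t.2.1, IsBounded σ x) ∧
    (t.1 :: (t.2.1 ++ [t.2.2])) <:+: w

/-- The descendant map on 1-blocks. -/
noncomputable def Desc [Inhabited A] (σ : A → List A) : A × List A × A → A × List A × A :=
  fun t => (RCw σ (σ t.1), RBw σ (σ t.1) ++ applyW σ t.2.1 ++ LBw σ (σ t.2.2), LCw σ (σ t.2.2))

/-- The bi-infinite word `ωu.wvω`. -/
noncomputable def biWord [Inhabited A] (u w v : List A) : ℤ → A := fun i =>
  if i < 0 then u.getD ((i % (u.length : ℤ)).toNat) default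
  else if i < (w.length : ℤ) then w.getD i.toNat default
  else v.getD (((i - (w.length : ℤ)) % (v.length : ℤ)).toNat) default

lemma applyW_append' (σ : A → List A) (u v : List A) :
    applyW σ (u ++ v) = applyW σ u ++ applyW σ v := by
  simp [applyW]

lemma iterW_succ' (σ : A → List A) (n : ℕ) (u : List A) :
    iterW σ (n + 1) u = applyW σ (iterW σ n u) :=
  Function.iterate_succ_apply' _ _ _

lemma iterW_zero (σ : A → List A) (u : List A) : iterW σ 0 u = u := rfl

lemma iterW_add' (σ : A → List A) (m n : ℕ) (u : List A) :
    iterW σ (m + n) u = iterW σ m (iterW σ n u) :=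
  Function.iterate_add_apply _ _ _ _

lemma iterW_append (σ : A → List A) (n : ℕ) (u v : List A) :
    iterW σ n (u ++ v) = iterW σ n u ++ iterW σ n v := by
  induction n with
  | zero => rfl
  | succ n ih => rw [iterW_succ', ih, applyW_append', ← iterW_succ', ← iterW_succ']

lemma iterW_nil (σ : A → List A) (n : ℕ) : iterW σ n [] = [] := by
  induction n with
  | zero => rfl
  | succ n ih => rw [iterW_succ', ih]; rfl

lemma applyW_singleton (σ : A → List A) (a : A) : applyW σ [a] = σ a := by
  simp [applyW]

lemma mem_iterW (σ : A → List A) {n : ℕ} {u : List A} {x : A}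
    (hx : x ∈ iterW σ n u) : ∃ b ∈ u, x ∈ iterW σ n [b] := by
  induction u with
  | nil => rw [iterW_nil] at hx; exact absurd hx List.not_mem_nil
  | cons b t ih =>
    have : (b :: t) = [b] ++ t := rfl
    rw [this, iterW_append, List.mem_append] at hx
    rcases hx with hx | hx
    · exact ⟨b, List.mem_cons_self, hx⟩
    · obtain ⟨b', hb', hx'⟩ := ih hx
      exact ⟨b', List.mem_cons_of_mem _ hb', hx'⟩

lemma length_iterW_le_of_mem (σ : A → List A) {n : ℕ} {u : List A} {b : A}
    (hb : b ∈ u) : (iterW σ n [b]).length ≤ (iterW σ n u).length := by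
  obtain ⟨s, t, rfl⟩ := List.append_of_mem hb
  have : s ++ b :: t = s ++ [b] ++ t := by simp
  rw [this, iterW_append, iterW_append]
  simp only [List.length_append]
  omega

lemma bounded_of_mem_iterW (σ : A → List A) {a b : A} {n : ℕ}
    (ha : IsBounded σ a) (hb : b ∈ iterW σ n [a]) : IsBounded σ b := by
  obtain ⟨K, hK⟩ := ha
  refine ⟨K, fun m => ?_⟩
  calc (iterW σ m [b]).length ≤ (iterW σ m (iterW σ n [a])).length :=
        length_iterW_le_of_mem σ hb
    _ = (iterW σ (m + n) [a]).length := by rw [iterW_add']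
    _ ≤ K := hK _

lemma bounded_word (σ : A → List A) {u : List A}
    (h : ∀ b ∈ u, IsBounded σ b) : ∃ K, ∀ n, (iterW σ n u).length ≤ K := by
  induction u with
  | nil => exact ⟨0, fun n => by rw [iterW_nil]; simp⟩
  | cons b t ih =>
    obtain ⟨K₁, hK₁⟩ := h b (List.mem_cons_self)
    obtain ⟨K₂, hK₂⟩ := ih (fun x hx => h x (List.mem_cons_of_mem _ hx))
    refine ⟨K₁ + K₂, fun n => ?_⟩
    have : (b :: t) = [b] ++ t := rfl
    rw [this, iterW_append]
    simpa using Nat.add_le_add (hK₁ n) (hK₂ n)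

lemma exists_growing_mem (σ : A → List A) {a : A} (ha : IsGrowing σ a) :
    ∃ b ∈ σ a, IsGrowing σ b := by
  by_contra h
  push_neg at h
  simp only [IsGrowing, not_not] at h
  obtain ⟨K, hK⟩ := bounded_word σ h
  refine ha ⟨max K 1, fun n => ?_⟩
  cases n with
  | zero => simp [iterW_zero]
  | succ n =>
    have : iterW σ (n + 1) [a] = iterW σ n (σ a) := by
      have h1 : iterW σ (n + 1) [a] = iterW σ n (applyW σ [a]) :=
        Function.iterate_succ_apply _ _ _
      rw [h1, applyW_singleton]
    rw [this]
    exact le_max_of_le_left (hK n)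

lemma sigma_decomp [Inhabited A] (σ : A → List A) {a : A} (ha : IsGrowing σ a) :
    ∃ w : List A, σ a = LBw σ (σ a) ++ LCw σ (σ a) :: w := by
  obtain ⟨b, hb, hbg⟩ := exists_growing_mem σ ha
  have hne : (σ a).dropWhile (fun x => decide (IsBounded σ x)) ≠ [] := by
    intro hnil
    rw [List.dropWhile_eq_nil_iff] at hnil
    exact hbg (of_decide_eq_true (hnil b hb))
  obtain ⟨x, xs, hxs⟩ := List.exists_cons_of_ne_nil hne
  refine ⟨xs, ?_⟩
  conv_lhs => rw [← List.takeWhile_append_dropWhile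
    (p := fun x => decide (IsBounded σ x)) (l := σ a)]
  rw [hxs]
  simp [LBw, LCw, hxs]

lemma takeWhile_append_cons {q : A → Bool} {l₁ l₂ : List A} {b : A}
    (h₁ : ∀ a ∈ l₁, q a = true) (hb : q b = false) :
    (l₁ ++ b :: l₂).takeWhile q = l₁ := by
  induction l₁ with
  | nil => simp [List.takeWhile, hb]
  | cons x xs ih =>
    simp only [List.cons_append, List.takeWhile_cons,
      h₁ x (List.mem_cons_self), if_true]
    rw [ih (fun a ha => h₁ a (List.mem_cons_of_mem _ ha))]

lemma applyW_flatten (σ : A → List A) (l : List (List A)) :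
    applyW σ l.flatten = (l.map (applyW σ)).flatten := by
  induction l with
  | nil => rfl
  | cons x xs ih => simp [applyW_append', ih]

/-- For `c = c₀` in a `p`-cycle of `G_L`,
`LB(σᵖ(c)) = L(c) = ⊔_{j<p} σ^{p−1−j}(LB(σ(c_j)))`, and `σᵖ(c) = L(c)·c·v`. -/
theorem stmt16 [Fintype A] [Inhabited A] (σ : A → List A) (hσ : NonErasing σ)
    (p : ℕ) (hp : 0 < p) (c : ℕ → A)
    (hgrow : ∀ i, IsGrowing σ (c i))
    (hper : ∀ i, c (i + p) = c i)
    (hdist : ∀ i < p, ∀ j < p, c i = c j → i = j)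
    (hcyc : ∀ i, LCw σ (σ (c i)) = c (i + 1)) :
    LBw σ (iterW σ p [c 0]) =
      ((List.range p).map (fun j => iterW σ (p - 1 - j) (LBw σ (σ (c j))))).flatten ∧
    ∃ v : List A, iterW σ p [c 0] =
      ((List.range p).map (fun j => iterW σ (p - 1 - j) (LBw σ (σ (c j))))).flatten
        ++ c 0 :: v := by
  have key : ∀ k, ∃ v, iterW σ k [c 0] =
      ((List.range k).map (fun j => iterW σ (k - 1 - j) (LBw σ (σ (c j))))).flatten
        ++ c k :: v := by
    intro k
    induction k with
    | zero => exact ⟨[], by simp [iterW_zero]⟩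
    | succ k ih =>
      obtain ⟨v, hv⟩ := ih
      obtain ⟨w, hw⟩ := sigma_decomp σ (hgrow k)
      rw [hcyc k] at hw
      refine ⟨w ++ applyW σ v, ?_⟩
      rw [iterW_succ', hv]
      have hck : (c k :: v) = [c k] ++ v := rfl
      rw [applyW_append', hck, applyW_append', applyW_singleton, hw]
      rw [applyW_flatten, List.map_map]
      have hmap : (List.range k).map (applyW σ ∘ fun j =>
          iterW σ (k - 1 - j) (LBw σ (σ (c j)))) =
          (List.range k).map (fun j => iterW σ (k + 1 - 1 - j) (LBw σ (σ (c j)))) := by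
        apply List.map_congr_left
        intro j hj
        have hjk := List.mem_range.mp hj
        have h1 : k - 1 - j + 1 = k + 1 - 1 - j := by omega
        simp only [Function.comp_apply, ← iterW_succ', h1]
      rw [hmap, List.range_succ, List.map_append, List.flatten_append]
      have h0 : k + 1 - 1 - k = 0 := by omega
      simp only [List.map_cons, List.map_nil, h0, iterW_zero, List.flatten_cons,
        List.flatten_nil, List.append_nil]
      simp
  obtain ⟨v, hv⟩ := key p
  have hcp : c p = c 0 := by have := hper 0; simpa using this
  rw [hcp] at hv
  have hbdd : ∀ x ∈ ((List.range p).map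
      (fun j => iterW σ (p - 1 - j) (LBw σ (σ (c j))))).flatten, IsBounded σ x := by
    intro x hx
    rw [List.mem_flatten] at hx
    obtain ⟨l, hl, hxl⟩ := hx
    rw [List.mem_map] at hl
    obtain ⟨j, _, rfl⟩ := hl
    obtain ⟨b, hb, hxb⟩ := mem_iterW σ hxl
    simp only [LBw] at hb
    have hbB : IsBounded σ b := of_decide_eq_true (List.mem_takeWhile_imp (p := fun a => decide (IsBounded σ a)) hb)
    exact bounded_of_mem_iterW σ hbB hxb
  constructor
  · rw [hv]
    unfold LBw
    exact takeWhile_append_cons (fun a ha => decide_eq_true (hbdd a ha))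
      (decide_eq_false (hgrow 0))
  · exact ⟨v, hv⟩

end SubstPaper
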